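/- Let λ, ε, k0, k3 ∈ ℝ with ε ≠ 0 and σ ∈ {+1,−1}, and let A : ℝ⁴ → ℝ⁴ be the plane-wave ansatz. Take the κ-Minkowski structure constants, the κ-Minkowski matrices γ, ρ, the Lie-Poisson bracket, the field strength F, the covariant derivative D, and the generalized equations-of-motion expression E_G with parameter α = −1/12. Then E_G^a(x) = 0 for every x ∈ ℝ⁴ and every a ∈ {0,1,2,3} if and only if the deformed dispersion relation (1 − λ²ε²) k0² − k3² = 0 holds. -/

import Mathlib

set_option autoImplicit false

open scoped BigOperators

/-- Partial derivative `∂_a u (x)` of `u : ℝ⁴ → ℝ`. -/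
noncomputable def pd (a : Fin 4) (u : (Fin 4 → ℝ) → ℝ) (x : Fin 4 → ℝ) : ℝ :=
  fderiv ℝ u x (Pi.single a 1)

/-- Lie-Poisson bracket `{u,v}(x) = Σ_{a,b,c} f^{ab}_c x^c ∂_a u ∂_b v`. -/
noncomputable def pb (f : Fin 4 → Fin 4 → Fin 4 → ℝ)
    (u v : (Fin 4 → ℝ) → ℝ) (x : Fin 4 → ℝ) : ℝ :=
  ∑ a, ∑ b, ∑ c, f a b c * x c * pd a u x * pd b v x

/-- Covariant derivative `(D_a ψ)(x) = Σ_m ρ^m_a(A(x)) (Σ_l γ^l_m(A(x)) ∂_l ψ(x) + {A_m, ψ}(x))`. -/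
noncomputable def Dcov (f : Fin 4 → Fin 4 → Fin 4 → ℝ)
    (γ ρ : (Fin 4 → ℝ) → Matrix (Fin 4) (Fin 4) ℝ)
    (A : (Fin 4 → ℝ) → Fin 4 → ℝ) (a : Fin 4)
    (ψ : (Fin 4 → ℝ) → ℝ) (x : Fin 4 → ℝ) : ℝ :=
  ∑ m, ρ (A x) m a * ((∑ l, γ (A x) l m * pd l ψ x) + pb f (fun y => A y m) ψ x)

/-- The Minkowski metric `η = diag(1,−1,−1,−1)`. -/
noncomputable def ηm : Matrix (Fin 4) (Fin 4) ℝ := Matrix.diagonal ![1, -1, -1, -1]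

/-- Indices raised with `η`: `F^{ab}(x) = Σ_{c,e} η^{ac} η^{be} F_{ce}(x)`. -/
noncomputable def Fup (F : (Fin 4 → ℝ) → Matrix (Fin 4) (Fin 4) ℝ)
    (a b : Fin 4) (x : Fin 4 → ℝ) : ℝ :=
  ∑ c, ∑ e, ηm a c * ηm b e * F x c e

/-- The covariant equations-of-motion expression `E_C^a(x)`. -/
noncomputable def EC (f : Fin 4 → Fin 4 → Fin 4 → ℝ)
    (γ ρ : (Fin 4 → ℝ) → Matrix (Fin 4) (Fin 4) ℝ)
    (A : (Fin 4 → ℝ) → Fin 4 → ℝ)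
    (F : (Fin 4 → ℝ) → Matrix (Fin 4) (Fin 4) ℝ)
    (a : Fin 4) (x : Fin 4 → ℝ) : ℝ :=
  (∑ c, Dcov f γ ρ A c (fun y => Fup F c a y) x)
  + (1/2) * (∑ d, ∑ e, ∑ b, F x d e * f d e b * Fup F a b x)
  - ∑ d, ∑ e, ∑ b, F x d e * f a e b * Fup F d b x

/-- κ-Minkowski structure constants `f^{ab}_c = λ(δ^a_0 δ^b_c − δ^b_0 δ^a_c)`. -/
def fκ (lam : ℝ) (a b c : Fin 4) : ℝ :=
  lam * ((if a = 0 then 1 else 0) * (if b = c then 1 else 0)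
       - (if b = 0 then 1 else 0) * (if a = c then 1 else 0))

/-- The κ-Minkowski matrix `γ(A)`: `γ^0_0 = 1`, `γ^0_c = −λ A_c` (c = 1,2,3),
`γ^l_c = δ^l_c` for `l = 1,2,3` (upper index = row). -/
def γκ (lam : ℝ) (A : Fin 4 → ℝ) : Matrix (Fin 4) (Fin 4) ℝ :=
  fun l c => if l = 0 then (if c = 0 then 1 else -lam * A c)
             else (if l = c then 1 else 0)

/-- The κ-Minkowski matrix `ρ(A) = diag(1, e^{λA_0}, e^{λA_0}, e^{λA_0})`. -/
noncomputable def ρκ (lam : ℝ) (A : Fin 4 → ℝ) : Matrix (Fin 4) (Fin 4) ℝ :=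
  fun m a => if m = a then (if m = 0 then 1 else Real.exp (lam * A 0)) else 0

/-- The phase `φ(x) = k0 x^0 − k3 x^3` of the plane wave. -/
def φpw (k0 k3 : ℝ) (x : Fin 4 → ℝ) : ℝ := k0 * x 0 - k3 * x 3

/-- The plane-wave ansatz `A_0 = 0`, `A_1 = ε sin φ`, `A_2 = −σ ε cos φ`, `A_3 = 0`. -/
noncomputable def Apw (ε σ k0 k3 : ℝ) (x : Fin 4 → ℝ) : Fin 4 → ℝ :=
  ![0, ε * Real.sin (φpw k0 k3 x), -σ * ε * Real.cos (φpw k0 k3 x), 0]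

/-- Field strength `F_{ab}(x)` of a gauge field `A` (as a matrix-valued function). -/
noncomputable def Fstr (f : Fin 4 → Fin 4 → Fin 4 → ℝ)
    (γ ρ : (Fin 4 → ℝ) → Matrix (Fin 4) (Fin 4) ℝ)
    (A : (Fin 4 → ℝ) → Fin 4 → ℝ) (x : Fin 4 → ℝ) : Matrix (Fin 4) (Fin 4) ℝ :=
  fun a b => ∑ c, ∑ e, ρ (A x) c a * ρ (A x) e b *
    ((∑ l, γ (A x) l c * pd l (fun y => A y e) x)
      - (∑ l, γ (A x) l e * pd l (fun y => A y c) x)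
      + pb f (fun y => A y c) (fun y => A y e) x)

/-- Field strength of the κ-Minkowski plane wave. -/
noncomputable def Fpw (lam ε σ k0 k3 : ℝ) : (Fin 4 → ℝ) → Matrix (Fin 4) (Fin 4) ℝ :=
  fun x => Fstr (fκ lam) (γκ lam) (ρκ lam) (Apw ε σ k0 k3) x

/-- The generalized equations-of-motion expression `E_G^a(x)` with parameter `α`,
for the κ-Minkowski plane wave. -/
noncomputable def EGpw (α lam ε σ k0 k3 : ℝ) (a : Fin 4) (x : Fin 4 → ℝ) : ℝ :=
  EC (fκ lam) (γκ lam) (ρκ lam) (Apw ε σ k0 k3) (Fpw lam ε σ k0 k3) a x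
    + α * ((∑ b, ∑ e, ∑ d, fκ lam b a b * Fpw lam ε σ k0 k3 x e d
              * Fup (Fpw lam ε σ k0 k3) e d x)
         + 4 * ∑ b, ∑ e, ∑ d, fκ lam b e b * Fpw lam ε σ k0 k3 x e d
              * Fup (Fpw lam ε σ k0 k3) d a x)

/-! Every component of the plane wave has the form `P + Q sin φ + R cos φ`, and so does every
component of its field strength; all their gradients are therefore multiples of the wave covector
`k = (k0, 0, 0, -k3)`. Since `f^{ab}_c` is antisymmetric in `a, b`, every Lie-Poisson bracket in
`F` and `E_G` vanishes, and what remains is an explicit trigonometric computation. For general `α`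
it gives `E_G^3 = -(1 + 12α) λ ε² k0 k3`, which singles out `α = -1/12`: there `E_G^3 ≡ 0` and the
other three components are multiples of the dispersion relation, the one in `E_G^2` being
`-σε ≠ 0` at `φ = 0`. -/

def phaseGrad (k0 k3 : ℝ) : Fin 4 → ℝ := ![k0, 0, 0, -k3]

noncomputable def phaseWave (k0 k3 P Q R : ℝ) (y : Fin 4 → ℝ) : ℝ :=
  P + Q * Real.sin (φpw k0 k3 y) + R * Real.cos (φpw k0 k3 y)

lemma hasFDerivAt_φpw (k0 k3 : ℝ) (x : Fin 4 → ℝ) :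
    HasFDerivAt (φpw k0 k3)
      (k0 • (ContinuousLinearMap.proj 0 : (Fin 4 → ℝ) →L[ℝ] ℝ)
        - k3 • ContinuousLinearMap.proj 3) x :=
  ((hasFDerivAt_apply 0 x).const_mul k0).sub ((hasFDerivAt_apply 3 x).const_mul k3)

lemma pd_comp_φpw {g : ℝ → ℝ} {g' k0 k3 : ℝ} {x : Fin 4 → ℝ}
    (hg : HasDerivAt g g' (φpw k0 k3 x)) (l : Fin 4) :
    pd l (fun y => g (φpw k0 k3 y)) x = g' * phaseGrad k0 k3 l := by
  have h : HasFDerivAt (fun y => g (φpw k0 k3 y)) _ x :=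
    hg.comp_hasFDerivAt x (hasFDerivAt_φpw k0 k3 x)
  rw [pd, h.fderiv]
  fin_cases l <;> simp [phaseGrad]

lemma pd_phaseWave (k0 k3 P Q R : ℝ) (l : Fin 4) (x : Fin 4 → ℝ) :
    pd l (phaseWave k0 k3 P Q R) x
      = (Q * Real.cos (φpw k0 k3 x) - R * Real.sin (φpw k0 k3 x)) * phaseGrad k0 k3 l := by
  set t := φpw k0 k3 x
  have hg : HasDerivAt (fun t => P + Q * Real.sin t + R * Real.cos t)
      (0 + Q * Real.cos t + R * -Real.sin t) t :=
    ((hasDerivAt_const t P).add ((Real.hasDerivAt_sin t).const_mul Q)).add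
      ((Real.hasDerivAt_cos t).const_mul R)
  exact (pd_comp_φpw hg l).trans (by ring)

lemma sum_sum_eq_zero_of_antisymm {ι : Type*} [Fintype ι] {g : ι → ι → ℝ}
    (hg : ∀ a b, g b a = -g a b) : ∑ a, ∑ b, g a b = 0 := by
  have h : ∑ a, ∑ b, g a b = -∑ a, ∑ b, g a b :=
    calc ∑ a, ∑ b, g a b = ∑ a, ∑ b, g b a := Finset.sum_comm
      _ = -∑ a, ∑ b, g a b := by
        simp only [← Finset.sum_neg_distrib]
        exact Finset.sum_congr rfl fun a _ => Finset.sum_congr rfl fun b _ => hg a b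
  linarith

lemma fκ_swap (lam : ℝ) (a b c : Fin 4) : fκ lam b a c = -fκ lam a b c := by
  simp only [fκ]; ring

lemma pb_eq_zero_of_pd_eq_mul {f : Fin 4 → Fin 4 → Fin 4 → ℝ}
    (hf : ∀ a b c, f b a c = -f a b c) (k : Fin 4 → ℝ) {u v : (Fin 4 → ℝ) → ℝ}
    {x : Fin 4 → ℝ} {du dv : ℝ} (hu : ∀ l, pd l u x = du * k l)
    (hv : ∀ l, pd l v x = dv * k l) :
    pb f u v x = 0 := by
  calc pb f u v x = du * dv * ∑ a, ∑ b, ∑ c, f a b c * x c * k a * k b := by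
        simp only [pb, hu, hv, Finset.mul_sum]
        refine Finset.sum_congr rfl fun _ _ => Finset.sum_congr rfl fun _ _ =>
          Finset.sum_congr rfl fun _ _ => by ring
    _ = 0 := by
        rw [sum_sum_eq_zero_of_antisymm fun a b => ?_, mul_zero]
        rw [← Finset.sum_neg_distrib]
        exact Finset.sum_congr rfl fun c _ => by rw [hf]; ring

lemma pb_phaseWave (lam k0 k3 P Q R P' Q' R' : ℝ) (x : Fin 4 → ℝ) :
    pb (fκ lam) (phaseWave k0 k3 P Q R) (phaseWave k0 k3 P' Q' R') x = 0 :=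
  pb_eq_zero_of_pd_eq_mul (fκ_swap lam) (phaseGrad k0 k3)
    (fun l => pd_phaseWave k0 k3 P Q R l x) (fun l => pd_phaseWave k0 k3 P' Q' R' l x)

lemma Fup_apply (F : (Fin 4 → ℝ) → Matrix (Fin 4) (Fin 4) ℝ) (a b : Fin 4) (x : Fin 4 → ℝ) :
    Fup F a b x = ηm a a * ηm b b * F x a b := by
  simp [Fup, ηm, Matrix.diagonal_apply]

section planeWave

variable (lam ε σ k0 k3 : ℝ)

lemma Apw_component_eq_phaseWave (m : Fin 4) :
    (fun y => Apw ε σ k0 k3 y m)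
      = phaseWave k0 k3 0 (![0, ε, 0, 0] m) (![0, 0, -σ * ε, 0] m) := by
  funext y
  fin_cases m <;> simp [Apw, phaseWave]

noncomputable def FpwConst : Matrix (Fin 4) (Fin 4) ℝ :=
  !![0, 0, 0, 0; 0, 0, -(lam * σ * ε ^ 2 * k0), 0; 0, lam * σ * ε ^ 2 * k0, 0, 0; 0, 0, 0, 0]

noncomputable def FpwSin : Matrix (Fin 4) (Fin 4) ℝ :=
  !![0, 0, σ * ε * k0, 0; 0, 0, 0, 0; -(σ * ε * k0), 0, 0, σ * ε * k3; 0, 0, -(σ * ε * k3), 0]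

noncomputable def FpwCos : Matrix (Fin 4) (Fin 4) ℝ :=
  !![0, ε * k0, 0, 0; -(ε * k0), 0, 0, ε * k3; 0, 0, 0, 0; 0, -(ε * k3), 0, 0]

lemma Fpw_apply (x : Fin 4 → ℝ) (a b : Fin 4) :
    Fpw lam ε σ k0 k3 x a b
      = phaseWave k0 k3 (FpwConst lam ε σ k0 a b) (FpwSin ε σ k0 k3 a b)
          (FpwCos ε k0 k3 a b) x := by
  -- `F_12` picks up `-λ A_1 ∂_0 A_2 + λ A_2 ∂_0 A_1 = -λσε²k0 (sin² φ + cos² φ)`.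
  have hconst : FpwConst lam ε σ k0 a b = FpwConst lam ε σ k0 a b
      * (Real.sin (φpw k0 k3 x) ^ 2 + Real.cos (φpw k0 k3 x) ^ 2) := by
    rw [Real.sin_sq_add_cos_sq, mul_one]
  simp only [Fpw, Fstr, Apw_component_eq_phaseWave, pd_phaseWave, pb_phaseWave,
    Fin.sum_univ_four]
  rw [phaseWave, hconst]
  fin_cases a <;> fin_cases b <;>
    simp only [ρκ, γκ, Apw, FpwConst, FpwSin, FpwCos, phaseGrad, Matrix.of_apply,
      Matrix.cons_val', Matrix.cons_val_fin_one, Matrix.cons_val_zero, Matrix.cons_val_one,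
      Matrix.cons_val, Fin.isValue, Fin.zero_eta, Fin.mk_one, Fin.reduceFinMk, Fin.reduceEq,
      ↓reduceIte, one_ne_zero, zero_ne_one, mul_zero, Real.exp_zero] <;> ring

lemma Fup_Fpw (c a : Fin 4) :
    (fun y => Fup (Fpw lam ε σ k0 k3) c a y)
      = phaseWave k0 k3 (ηm c c * ηm a a * FpwConst lam ε σ k0 c a)
          (ηm c c * ηm a a * FpwSin ε σ k0 k3 c a) (ηm c c * ηm a a * FpwCos ε k0 k3 c a) := by
  funext y
  rw [Fup_apply, Fpw_apply, phaseWave, phaseWave]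
  ring

lemma EGpw_apply (α : ℝ) (hσ : σ ^ 2 = 1) (x : Fin 4 → ℝ) (a : Fin 4) :
    EGpw α lam ε σ k0 k3 a x
      = ![lam * ε ^ 2 * ((1 - 6 * α) * k0 ^ 2 - (2 + 6 * α) * (k3 ^ 2 + lam ^ 2 * ε ^ 2 * k0 ^ 2)),
          ε * Real.sin (φpw k0 k3 x) * (k0 ^ 2 - k3 ^ 2 - 2 * (1 + 6 * α) * lam ^ 2 * ε ^ 2 * k0 ^ 2),
          -σ * ε * Real.cos (φpw k0 k3 x)
            * (k0 ^ 2 - k3 ^ 2 - 2 * (1 + 6 * α) * lam ^ 2 * ε ^ 2 * k0 ^ 2),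
          -(1 + 12 * α) * lam * ε ^ 2 * k0 * k3] a := by
  have hs := Real.sin_sq_add_cos_sq (φpw k0 k3 x)
  set s := Real.sin (φpw k0 k3 x)
  set c := Real.cos (φpw k0 k3 x)
  simp only [EGpw, EC, Dcov, Fup_Fpw, Fpw_apply, Apw_component_eq_phaseWave, pd_phaseWave,
    pb_phaseWave, Fin.sum_univ_four]
  fin_cases a <;>
    simp only [ρκ, γκ, Apw, FpwConst, FpwSin, FpwCos, phaseGrad, phaseWave, fκ, ηm,
      Matrix.diagonal_apply_eq, Matrix.of_apply, Matrix.cons_val', Matrix.cons_val_fin_one,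
      Matrix.cons_val_zero, Matrix.cons_val_one, Matrix.cons_val, Fin.isValue, Fin.zero_eta,
      Fin.mk_one, Fin.reduceFinMk, Fin.reduceEq, ↓reduceIte, one_ne_zero, zero_ne_one, mul_zero,
      Real.exp_zero]
  · linear_combination lam * ε ^ 2 * (-6 * α * s ^ 2 * k0 ^ 2 - (2 + 6 * α) * s ^ 2 * k3 ^ 2
        + k0 ^ 2 * c ^ 2 - (2 + 6 * α) * lam ^ 2 * ε ^ 2 * k0 ^ 2) * hσ
      + lam * ε ^ 2 * ((1 - 6 * α) * k0 ^ 2 - (2 + 6 * α) * k3 ^ 2) * hs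
  · linear_combination -2 * (1 + 6 * α) * lam ^ 2 * ε ^ 3 * k0 ^ 2 * s * hσ
  · ring
  · linear_combination lam * ε ^ 2 * k0 * k3 * ((c ^ 2 - 2 * (1 + 6 * α) * s ^ 2) * hσ
      - (1 + 12 * α) * hs)

lemma EGpw_neg_one_div_twelve (hσ : σ ^ 2 = 1) (x : Fin 4 → ℝ) (a : Fin 4) :
    EGpw (-(1 / 12)) lam ε σ k0 k3 a x
      = ![3 / 2 * lam * ε ^ 2, ε * Real.sin (φpw k0 k3 x), -σ * ε * Real.cos (φpw k0 k3 x), 0] a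
          * ((1 - lam ^ 2 * ε ^ 2) * k0 ^ 2 - k3 ^ 2) := by
  rw [EGpw_apply lam ε σ k0 k3 _ hσ]
  fin_cases a <;>
    simp only [Fin.zero_eta, Fin.mk_one, Fin.reduceFinMk, Fin.isValue, Matrix.cons_val_zero,
      Matrix.cons_val_one, Matrix.cons_val] <;> ring

end planeWave

theorem stmt4 (lam ε k0 k3 σ : ℝ) (hε : ε ≠ 0) (hσ : σ = 1 ∨ σ = -1) :
    (∀ (x : Fin 4 → ℝ) (a : Fin 4), EGpw (-(1/12)) lam ε σ k0 k3 a x = 0)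
      ↔ (1 - lam ^ 2 * ε ^ 2) * k0 ^ 2 - k3 ^ 2 = 0 := by
  have hσ2 : σ ^ 2 = 1 := by rcases hσ with rfl | rfl <;> norm_num
  have hσ0 : σ ≠ 0 := by rintro rfl; norm_num at hσ2
  constructor
  · intro h
    have h2 := h 0 2
    rw [EGpw_neg_one_div_twelve lam ε σ k0 k3 hσ2] at h2
    simpa [φpw, hσ0, hε] using h2
  · intro hD x a
    rw [EGpw_neg_one_div_twelve lam ε σ k0 k3 hσ2, hD, mul_zero]
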